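/- arXiv:2107.06969 — 2 statements merged into one kernel-verified Lean document; each statement's English description precedes it below -/
import Mathlib

section
/- Let G = ⟨x, y | x^p = y^m = 1, x^{-1} y x = y^r⟩ where p is the smallest prime divisor of |G| and gcd(p(r-1), m) = 1. Then every sequence of length m + p - 1 over G contains a nonempty subsequence whose elements can be ordered so that their product equals 1. Equivalently, d(G) ≤ m + p - 2. -/
/-- The set of products of a sequence (multiset) `S` over all orderings. -/
def piSet {G : Type*} [Group G] (S : Multiset G) : Set G :=
  {g | ∃ l : List G, (l : Multiset G) = S ∧ l.prod = g}

/-- The set `Π(S)` of all products of nonempty subsequences of `S`. -/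
def subProds {G : Type*} [Group G] (S : Multiset G) : Set G :=
  {g | ∃ T : Multiset G, T ≤ S ∧ T ≠ 0 ∧ g ∈ piSet T}

/-- The small Davenport constant: the maximal length of a product-one free sequence. -/
noncomputable def dG (G : Type*) [Group G] : ℕ :=
  sSup {n | ∃ S : Multiset G, Multiset.card S = n ∧ (1 : G) ∉ subProds S}

/-!
Let `φ : G → ZMod p` read off the exponent of `x`, so that `ker φ = ⟨y⟩` and conjugation by `g`
acts on `⟨y⟩` as `y ↦ y ^ (r ^ φ g)`. Cutting minimal `φ`-zero-sum subsequences off a sequence of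
length `m + p - 1` leaves fewer than `p` terms, and yields blocks whose products lie in `⟨y⟩` and
whose total weight (number of distinct partial `φ`-sums, the length for a minimal block) is at
least `m`. Rotating a block conjugates its product and multiplies its `y`-exponent by `r ^ c`, `c` a
partial sum; since `r` has order `p` modulo every prime `q ∣ m`, a block of weight `w` offers `w`
distinct exponents modulo `q`. By Cauchy–Davenport, suitable rotations of blocks of total weight at
least `q` concatenate to a block whose exponent is divisible by `q`, losing at most a factor `q` in
weight. Descending along the prime factors of `m` ends with a block whose product is `1`.
-/

open scoped Pointwise

section PrefixSums
variable {α A : Type*} [AddCommGroup A]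

/-- Sums of the proper prefixes; for a zero-sum list the full sum would add nothing new. -/
def prefixSums [DecidableEq A] (s : List A) : Finset A :=
  (Finset.range s.length).image fun k => (s.take k).sum

lemma prefixSums_subset_append [DecidableEq A] (s t : List A) :
    prefixSums s ⊆ prefixSums (s ++ t) := by
  intro c hc
  obtain ⟨k, hk, rfl⟩ := Finset.mem_image.1 hc
  rw [Finset.mem_range] at hk
  refine Finset.mem_image.2 ⟨k, ?_, by rw [List.take_append_of_le_length hk.le]⟩
  simp only [Finset.mem_range, List.length_append]
  omega

/-- For a zero-sum list, rotating by `k` shifts the partial sums by `-(s.take k).sum`. -/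
lemma card_prefixSums_le_rotate [DecidableEq A] {s : List A} (hs : s.sum = 0) {k : ℕ}
    (hk : k ≤ s.length) : (prefixSums s).card ≤ (prefixSums (s.rotate k)).card := by
  set c := (s.take k).sum
  have hdrop : (s.drop k).sum = -c := by
    rw [eq_neg_iff_add_eq_zero, add_comm, ← List.sum_append, List.take_append_drop, hs]
  have hsub : (prefixSums s).image (· - c) ⊆ prefixSums (s.rotate k) := by
    have hlen : (s.drop k ++ s.take k).length = s.length := by simp; omega
    simp only [Finset.subset_iff, Finset.mem_image, prefixSums, Finset.mem_range,
      List.rotate_eq_drop_append_take hk, hlen]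
    rintro _ ⟨_, ⟨i, hi, rfl⟩, rfl⟩
    rcases le_or_gt k i with hki | hik
    · refine ⟨i - k, by omega, ?_⟩
      rw [List.take_append_of_le_length (by simp; omega), ← Nat.add_sub_cancel' hki,
        List.take_add, List.sum_append, Nat.add_sub_cancel' hki]
      abel
    · refine ⟨s.length - k + i, by omega, ?_⟩
      rw [List.take_append, List.length_drop, Nat.add_sub_cancel_left,
        List.take_of_length_le (by simp), List.sum_append, hdrop,
        List.take_take, min_eq_left hik.le]
      abel
  calc (prefixSums s).card = ((prefixSums s).image (· - c)).card :=
        (Finset.card_image_of_injective _ sub_left_injective).symm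
    _ ≤ _ := Finset.card_le_card hsub

lemma exists_le_card_eq_sum_map_eq_zero (l : List α) (f : α → A) {i j : ℕ} (hij : i ≤ j)
    (hj : j ≤ l.length) (heq : ((l.map f).take i).sum = ((l.map f).take j).sum) :
    ∃ D : Multiset α, D ≤ l ∧ Multiset.card D = j - i ∧ (D.map f).sum = 0 := by
  refine ⟨(l.drop i).take (j - i), ((List.take_sublist _ _).trans (List.drop_sublist _ _)).subperm,
    by simp; omega, ?_⟩
  rw [← List.map_take, ← List.map_take, ← Nat.add_sub_cancel' hij, List.take_add, List.map_append,
    List.sum_append] at heq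
  simpa using heq.symm

end PrefixSums

lemma exists_le_ne_zero_sum_map_eq_zero {α : Type*} {p : ℕ} [NeZero p] (f : α → ZMod p)
    (X : Multiset α) (hX : p ≤ Multiset.card X) : ∃ D ≤ X, D ≠ 0 ∧ (D.map f).sum = 0 := by
  set l := X.toList
  obtain ⟨i, j, hne, heq⟩ := Fintype.exists_ne_map_eq_of_card_lt
    (fun k : Fin (p + 1) => ((l.map f).take k).sum) (by simp)
  wlog hij : i < j generalizing i j
  · exact this j i hne.symm heq.symm (lt_of_le_of_ne (not_lt.1 hij) hne.symm)
  have hj : (j : ℕ) ≤ l.length := by simpa [l] using (Nat.lt_succ_iff.1 j.isLt).trans hX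
  obtain ⟨D, hD, hcard, hsum⟩ := exists_le_card_eq_sum_map_eq_zero l f hij.le hj heq
  refine ⟨D, by simpa [l] using hD, ?_, hsum⟩
  rw [← Multiset.card_pos, hcard]
  exact Nat.sub_pos_of_lt hij

lemma ZMod.min_le_card_add_multiset_sum {q : ℕ} (hq : q.Prime) {A : Finset (ZMod q)}
    (hA : A.Nonempty) (Bs : Multiset (Finset (ZMod q))) (hBs : ∀ B ∈ Bs, B.Nonempty) :
    min q (A.card + (Bs.map fun B => B.card - 1).sum) ≤ (A + Bs.sum).card := by
  induction Bs using Multiset.induction generalizing A with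
  | empty => simp
  | cons B Bs ih =>
    have hB := hBs B (Multiset.mem_cons_self B Bs)
    have hcd := ZMod.cauchy_davenport hq hA hB
    have hrest := ih (hA.add hB) fun B' hB' => hBs B' (Multiset.mem_cons_of_mem hB')
    rw [Multiset.sum_cons, ← add_assoc]
    simp only [Multiset.map_cons, Multiset.sum_cons]
    have := hB.card_pos
    omega

lemma exists_cons_le_of_le_sum_map {α : Type*} (f : α → ℕ) {q : ℕ} (hq : 0 < q)
    (s : Multiset α) (hs : q ≤ (s.map f).sum) :
    ∃ a W, a ::ₘ W ≤ s ∧ (W.map f).sum < q ∧ q ≤ f a + (W.map f).sum := by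
  induction s using Multiset.induction with
  | empty => simp at hs; omega
  | cons a s ih =>
    by_cases h : q ≤ (s.map f).sum
    · obtain ⟨b, W, hle, hlt, hge⟩ := ih h
      exact ⟨b, W, hle.trans (Multiset.le_cons_self s a), hlt, hge⟩
    · exact ⟨a, s, le_rfl, by omega, by simpa using hs⟩

section ProductOne
variable {G : Type*} [Group G]

lemma subProds_mono {S S' : Multiset G} (h : S ≤ S') : subProds S ⊆ subProds S' :=
  fun _ ⟨T, hT, hT0, hg⟩ => ⟨T, hT.trans h, hT0, hg⟩

lemma one_mem_subProds_of_prod_eq_one {l : List G} (hl : l ≠ []) (h : l.prod = 1) :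
    1 ∈ subProds (l : Multiset G) :=
  ⟨l, le_rfl, by simpa using hl, l, rfl, h⟩

variable {p : ℕ}

structure IsMetacyclicIndex (φ : G → ZMod p) (y : G) (r : ℕ) : Prop where
  map_mul : ∀ g h, φ (g * h) = φ g + φ h
  exists_eq_pow_of_eq_zero : ∀ g, φ g = 0 → ∃ a : ℕ, g = y ^ a
  inv_mul_pow_mul : ∀ (g : G) (a : ℕ), g⁻¹ * y ^ a * g = y ^ (a * r ^ (φ g).val)

namespace IsMetacyclicIndex
variable {φ : G → ZMod p} {y : G} {r : ℕ}

lemma map_one (hφ : IsMetacyclicIndex φ y r) : φ 1 = 0 := by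
  simpa using hφ.map_mul 1 1

lemma map_list_prod (hφ : IsMetacyclicIndex φ y r) (l : List G) : φ l.prod = (l.map φ).sum := by
  induction l with
  | nil => exact hφ.map_one
  | cons g l ih => rw [List.prod_cons, hφ.map_mul, ih, List.map_cons, List.sum_cons]

end IsMetacyclicIndex

structure Block (φ : G → ZMod p) (y : G) (d : ℕ) where
  list : List G
  exp : ℕ
  list_ne_nil : list ≠ []
  sum_map_eq_zero : (list.map φ).sum = 0
  prod_eq : list.prod = y ^ (d * exp)

variable {φ : G → ZMod p} {y : G} {d r m : ℕ}

namespace Block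

def weight (t : Block φ y d) : ℕ := (prefixSums (t.list.map φ)).card

lemma zero_mem_prefixSums (t : Block φ y d) : 0 ∈ prefixSums (t.list.map φ) :=
  Finset.mem_image.2 ⟨0, by simpa using List.length_pos_iff.2 t.list_ne_nil, by simp⟩

lemma weight_pos (t : Block φ y d) : 0 < t.weight :=
  Finset.card_pos.2 ⟨0, t.zero_mem_prefixSums⟩

def append (t t' : Block φ y d) : Block φ y d where
  list := t.list ++ t'.list
  exp := t.exp + t'.exp
  list_ne_nil := by simp [t.list_ne_nil]
  sum_map_eq_zero := by simp [t.sum_map_eq_zero, t'.sum_map_eq_zero]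
  prod_eq := by rw [List.prod_append, t.prod_eq, t'.prod_eq, mul_add, pow_add]

lemma weight_le_weight_append (t t' : Block φ y d) : t.weight ≤ (t.append t').weight := by
  unfold weight append
  rw [List.map_append]
  exact Finset.card_le_card (prefixSums_subset_append _ _)

def lift (t : Block φ y d) {q : ℕ} (h : q ∣ t.exp) : Block φ y (d * q) where
  list := t.list
  exp := t.exp / q
  list_ne_nil := t.list_ne_nil
  sum_map_eq_zero := t.sum_map_eq_zero
  prod_eq := by rw [t.prod_eq, mul_assoc, Nat.mul_div_cancel' h]

/-- Rotating the list conjugates its product by the product of the rotated-away prefix. -/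
lemma exists_rotate (hφ : IsMetacyclicIndex φ y r) (t : Block φ y d) {c : ZMod p}
    (hc : c ∈ prefixSums (t.list.map φ)) :
    ∃ t' : Block φ y d, t'.exp = t.exp * r ^ c.val ∧ (t'.list : Multiset G) = t.list ∧
      t.weight ≤ t'.weight := by
  obtain ⟨k, hk, rfl⟩ := Finset.mem_image.1 hc
  rw [Finset.mem_range, List.length_map] at hk
  set u := t.list.take k
  have hprod : (t.list.rotate k).prod = u.prod⁻¹ * t.list.prod * u.prod := by
    have hsplit : t.list.prod = u.prod * (t.list.drop k).prod := by
      rw [← List.prod_append, List.take_append_drop]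
    rw [List.rotate_eq_drop_append_take hk.le, List.prod_append, hsplit, inv_mul_cancel_left]
  refine ⟨⟨t.list.rotate k, t.exp * r ^ (φ u.prod).val, ?_, ?_, ?_⟩, ?_, ?_, ?_⟩
  · simpa using t.list_ne_nil
  · rw [List.map_rotate, (List.rotate_perm _ _).sum_eq, t.sum_map_eq_zero]
  · rw [hprod, t.prod_eq, hφ.inv_mul_pow_mul, mul_assoc]
  · show t.exp * r ^ (φ u.prod).val = _
    rw [hφ.map_list_prod, List.map_take]
  · exact Multiset.coe_eq_coe.2 (List.rotate_perm _ _)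
  · unfold weight
    rw [List.map_rotate]
    exact card_prefixSums_le_rotate t.sum_map_eq_zero (by simpa using hk.le)

/-- A minimal zero-sum sequence has pairwise distinct partial sums. -/
lemma exists_of_minimal (hφ : IsMetacyclicIndex φ y r) (C : Multiset G) (hC : C ≠ 0)
    (hsum : (C.map φ).sum = 0) (hmin : ∀ D < C, D ≠ 0 → (D.map φ).sum ≠ 0) :
    ∃ t : Block φ y 1, (t.list : Multiset G) = C ∧ Multiset.card C ≤ t.weight := by
  set l := C.toList
  have hlC : (l : Multiset G) = C := Multiset.coe_toList C
  have hl : l ≠ [] := by simpa [l] using hC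
  have hlsum : (l.map φ).sum = 0 := by rw [← hsum, ← hlC, Multiset.map_coe, Multiset.sum_coe]
  obtain ⟨a, ha⟩ := hφ.exists_eq_pow_of_eq_zero l.prod (by rw [hφ.map_list_prod, hlsum])
  refine ⟨⟨l, a, hl, hlsum, by rw [one_mul, ha]⟩, hlC, ?_⟩
  have hinj : Set.InjOn (fun k => ((l.map φ).take k).sum) (Finset.range (l.map φ).length) := by
    intro i hi j hj heq
    by_contra hne
    wlog hij : i < j generalizing i j
    · exact this hj hi heq.symm (Ne.symm hne) (lt_of_le_of_ne (not_lt.1 hij) (Ne.symm hne))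
    simp only [Finset.coe_range, Set.mem_Iio, List.length_map] at hj
    obtain ⟨D, hD, hcard, hDsum⟩ := exists_le_card_eq_sum_map_eq_zero l φ hij.le hj.le heq
    have hCcard : Multiset.card C = l.length := by rw [← hlC, Multiset.coe_card]
    refine hmin D (lt_of_le_of_ne (hlC ▸ hD) ?_) ?_ hDsum
    · rintro rfl; omega
    · rw [← Multiset.card_pos, hcard]; omega
  show Multiset.card C ≤ (prefixSums (l.map φ)).card
  rw [prefixSums, Finset.card_image_of_injOn hinj, Finset.card_range, ← hlC, Multiset.coe_card,
    List.length_map]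

def rotationExps (q r : ℕ) (t : Block φ y d) : Finset (ZMod q) :=
  (prefixSums (t.list.map φ)).image fun c => (t.exp : ZMod q) * (r : ZMod q) ^ c.val

lemma rotationExps_nonempty {q : ℕ} (t : Block φ y d) : (t.rotationExps q r).Nonempty :=
  ⟨_, Finset.mem_image_of_mem _ t.zero_mem_prefixSums⟩

lemma exists_of_mem_rotationExps {q : ℕ} (hφ : IsMetacyclicIndex φ y r) (t : Block φ y d)
    {z : ZMod q} (hz : z ∈ t.rotationExps q r) :
    ∃ t' : Block φ y d, (t'.exp : ZMod q) = z ∧ (t'.list : Multiset G) = t.list ∧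
      t.weight ≤ t'.weight := by
  obtain ⟨c, hc, rfl⟩ := Finset.mem_image.1 hz
  obtain ⟨t', hexp, hlist, hw⟩ := t.exists_rotate hφ hc
  exact ⟨t', by rw [hexp]; push_cast; rfl, hlist, hw⟩

section Live
variable {q : ℕ} [Fact q.Prime] [NeZero p]

lemma card_rotationExps (hord : orderOf (r : ZMod q) = p) (t : Block φ y d) (ht : ¬ q ∣ t.exp) :
    (t.rotationExps q r).card = t.weight := by
  refine Finset.card_image_of_injOn fun c _ c' _ hcc' => ZMod.val_injective p ?_
  have hexp : (t.exp : ZMod q) ≠ 0 := mt (ZMod.natCast_eq_zero_iff _ _).1 ht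
  refine pow_injOn_Iio_orderOf ?_ ?_ (mul_left_cancel₀ hexp hcc')
  · simpa [hord] using ZMod.val_lt c
  · simpa [hord] using ZMod.val_lt c'

lemma zero_notMem_rotationExps (hord : orderOf (r : ZMod q) = p) (t : Block φ y d)
    (ht : ¬ q ∣ t.exp) : 0 ∉ t.rotationExps q r := by
  have hexp : (t.exp : ZMod q) ≠ 0 := mt (ZMod.natCast_eq_zero_iff _ _).1 ht
  have hr0 : (r : ZMod q) ≠ 0 := by
    rintro h
    have := pow_orderOf_eq_one (r : ZMod q)
    rw [hord, h, zero_pow (NeZero.ne p)] at this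
    exact zero_ne_one this
  simp only [rotationExps, Finset.mem_image, not_exists, not_and]
  exact fun c _ => mul_ne_zero hexp (pow_ne_zero _ hr0)

end Live

end Block

def blocksSeq (W : Multiset (Block φ y d)) : Multiset G := W.bind fun t => t.list

def blocksWeight (W : Multiset (Block φ y d)) : ℕ := (W.map Block.weight).sum

namespace Block

def rotationSumset (q r : ℕ) (t₀ : Block φ y d) (W : Multiset (Block φ y d)) :
    Finset (ZMod q) :=
  t₀.rotationExps q r + (W.map fun t => insert 0 (t.rotationExps q r)).sum

lemma exists_of_mem_rotationSumset {q : ℕ} (hφ : IsMetacyclicIndex φ y r) (t₀ : Block φ y d)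
    (W : Multiset (Block φ y d)) {z : ZMod q} (hz : z ∈ t₀.rotationSumset q r W) :
    ∃ T : Block φ y d, (T.exp : ZMod q) = z ∧ (T.list : Multiset G) ≤ t₀.list + blocksSeq W ∧
      t₀.weight ≤ T.weight := by
  induction W using Multiset.induction generalizing z with
  | empty =>
    obtain ⟨T, hexp, hlist, hw⟩ :=
      t₀.exists_of_mem_rotationExps hφ (by simpa [rotationSumset] using hz)
    exact ⟨T, hexp, by simp [hlist, blocksSeq], hw⟩
  | cons t W ih =>
    rw [rotationSumset, Multiset.map_cons, Multiset.sum_cons, add_left_comm] at hz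
    obtain ⟨u, hu, v, hv, rfl⟩ := Finset.mem_add.1 hz
    obtain ⟨T, hexp, hlist, hw⟩ := ih hv
    have hseq : blocksSeq (t ::ₘ W) = t.list + blocksSeq W := by simp [blocksSeq]
    rcases Finset.mem_insert.1 hu with rfl | hu
    · refine ⟨T, by rw [hexp, zero_add], hlist.trans ?_, hw⟩
      rw [hseq, add_left_comm]
      exact Multiset.le_add_left _ _
    · obtain ⟨t', hexp', hlist', -⟩ := t.exists_of_mem_rotationExps hφ hu
      refine ⟨T.append t', ?_, ?_, hw.trans (T.weight_le_weight_append t')⟩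
      · simp only [append, Nat.cast_add, hexp, hexp', add_comm]
      · rw [append, ← Multiset.coe_add, hlist', hseq, add_left_comm,
          add_comm (T.list : Multiset G)]
        exact add_le_add_right hlist _

/-- By Cauchy–Davenport the rotation sumset has at least `q` elements. -/
lemma zero_mem_rotationSumset {q : ℕ} [Fact q.Prime] [NeZero p]
    (hord : orderOf (r : ZMod q) = p) (t₀ : Block φ y d) (W : Multiset (Block φ y d))
    (hlive : ∀ t ∈ t₀ ::ₘ W, ¬ q ∣ t.exp) (hq : q ≤ t₀.weight + blocksWeight W) :
    0 ∈ t₀.rotationSumset q r W := by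
  have hsum : ((W.map fun t => insert 0 (t.rotationExps q r)).map fun B => B.card - 1).sum =
      blocksWeight W := by
    rw [Multiset.map_map, blocksWeight]
    congr 1
    refine Multiset.map_congr rfl fun t ht => ?_
    have hlive_t := hlive t (Multiset.mem_cons_of_mem ht)
    simp [Finset.card_insert_of_notMem (t.zero_notMem_rotationExps hord hlive_t),
      t.card_rotationExps hord hlive_t]
  have hcard := ZMod.min_le_card_add_multiset_sum Fact.out (t₀.rotationExps_nonempty (r := r))
    (W.map fun t => insert 0 (t.rotationExps q r)) (by simp)
  rw [hsum, t₀.card_rotationExps hord (hlive t₀ (Multiset.mem_cons_self _ _)), min_eq_left hq]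
    at hcard
  have huniv : t₀.rotationSumset q r W = Finset.univ :=
    Finset.eq_univ_of_card _
      (le_antisymm (Finset.card_le_univ _) (by simpa [rotationSumset] using hcard))
  simp [huniv]

end Block

section Lifting
variable {q : ℕ} [Fact q.Prime] [NeZero p]

lemma exists_lift_of_le_blocksWeight (hφ : IsMetacyclicIndex φ y r)
    (hord : orderOf (r : ZMod q) = p) (pool : Multiset (Block φ y d))
    (hq : q ≤ blocksWeight pool) :
    ∃ U ≤ pool, U ≠ 0 ∧ ∃ T : Block φ y (d * q),
      (T.list : Multiset G) ≤ blocksSeq U ∧ blocksWeight U ≤ q * T.weight := by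
  have hq2 := (Fact.out : q.Prime).two_le
  by_cases hdead : ∃ t ∈ pool, q ∣ t.exp
  · obtain ⟨t, ht, hdvd⟩ := hdead
    refine ⟨{t}, Multiset.singleton_le.2 ht, Multiset.singleton_ne_zero t, t.lift hdvd, ?_, ?_⟩
    · simp [blocksSeq, Block.lift]
    · simp only [blocksWeight, Multiset.map_singleton, Multiset.sum_singleton]
      exact Nat.le_mul_of_pos_left _ (by omega)
  push Not at hdead
  obtain ⟨t₀, W, hle, hlt, hge⟩ :=
    exists_cons_le_of_le_sum_map Block.weight (by omega) pool hq
  have hlive : ∀ t ∈ t₀ ::ₘ W, ¬ q ∣ t.exp := fun t ht => hdead t (Multiset.mem_of_le hle ht)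
  obtain ⟨T, hexp, hlist, hw⟩ := t₀.exists_of_mem_rotationSumset hφ W
    (t₀.zero_mem_rotationSumset hord W hlive hge)
  refine ⟨t₀ ::ₘ W, hle, Multiset.cons_ne_zero, T.lift ((ZMod.natCast_eq_zero_iff _ _).1 hexp),
    by simpa [blocksSeq, Block.lift] using hlist, ?_⟩
  have := t₀.weight_pos
  simp only [blocksWeight, Multiset.map_cons, Multiset.sum_cons]
  change _ ≤ q * T.weight
  nlinarith

lemma exists_lifted_blocks (hφ : IsMetacyclicIndex φ y r) (hord : orderOf (r : ZMod q) = p)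
    (pool : Multiset (Block φ y d)) :
    ∃ out : Multiset (Block φ y (d * q)),
      blocksSeq out ≤ blocksSeq pool ∧ blocksWeight pool ≤ q * blocksWeight out + (q - 1) := by
  induction pool using WellFoundedLT.induction with
  | _ pool ih =>
  by_cases hq : q ≤ blocksWeight pool
  · obtain ⟨U, hU, hU0, T, hlist, hw⟩ := exists_lift_of_le_blocksWeight hφ hord pool hq
    obtain ⟨V, rfl⟩ := Multiset.le_iff_exists_add.1 hU
    obtain ⟨out, hseq, hw'⟩ := ih V (lt_add_of_pos_left V (pos_iff_ne_zero.2 hU0))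
    refine ⟨T ::ₘ out, ?_, ?_⟩
    · simpa [blocksSeq] using add_le_add hlist hseq
    · simp only [blocksWeight, Multiset.map_add, Multiset.sum_add, Multiset.map_cons,
        Multiset.sum_cons] at hw hw' ⊢
      nlinarith
  · exact ⟨0, by simp [blocksSeq], by simp [blocksWeight] at hq ⊢; omega⟩

end Lifting

/-- At level `d` the block products are powers of `y ^ d`, an element of order `n = m / d`. -/
theorem one_mem_subProds_blocksSeq [NeZero p] (hφ : IsMetacyclicIndex φ y r)
    (hoy : orderOf y = m) (hm : 0 < m)
    (hord : ∀ q, q.Prime → q ∣ m → orderOf (r : ZMod q) = p) (n d : ℕ) (hdn : d * n = m)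
    (W : Multiset (Block φ y d)) (hW : n ≤ blocksWeight W) : 1 ∈ subProds (blocksSeq W) := by
  induction n using Nat.strong_induction_on generalizing d with
  | _ n ih =>
  have hn : n ≠ 0 := by rintro rfl; omega
  rcases eq_or_ne n 1 with rfl | hn1
  · obtain ⟨t, ht⟩ := Multiset.exists_mem_of_ne_zero (s := W)
      (by rintro rfl; simp [blocksWeight] at hW)
    refine subProds_mono (Multiset.le_bind W ht) (one_mem_subProds_of_prod_eq_one t.list_ne_nil ?_)
    rw [t.prod_eq, ← orderOf_dvd_iff_pow_eq_one, hoy, ← hdn, mul_one]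
    exact dvd_mul_right d t.exp
  set q := n.minFac
  have hq : q.Prime := Nat.minFac_prime hn1
  have := Fact.mk hq
  obtain ⟨n', hn'⟩ : q ∣ n := Nat.minFac_dvd n
  obtain ⟨out, hseq, hw⟩ :=
    exists_lifted_blocks hφ (hord q hq ⟨d * n', by rw [← hdn, hn']; ring⟩) W
  have hq2 := hq.two_le
  have hn'0 : 0 < n' := Nat.pos_of_ne_zero (by rintro rfl; exact hn (by simpa using hn'))
  refine subProds_mono hseq (ih n' (by nlinarith) (d * q) (by rw [← hdn, hn']; ring) out ?_)
  by_contra! h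
  have := Nat.mul_le_mul_left q (Nat.succ_le_of_lt h)
  rw [Nat.mul_succ] at this
  omega

lemma exists_blocks [NeZero p] (hφ : IsMetacyclicIndex φ y r) (X : Multiset G) :
    ∃ W : Multiset (Block φ y 1),
      blocksSeq W ≤ X ∧ Multiset.card X ≤ blocksWeight W + (p - 1) := by
  induction X using WellFoundedLT.induction with
  | _ X ih =>
  by_cases h : ∃ D ≤ X, D ≠ 0 ∧ (D.map φ).sum = 0
  · obtain ⟨C, ⟨hCX, hC0, hCsum⟩, hCmin⟩ := wellFounded_lt.has_min
      {D | D ≤ X ∧ D ≠ 0 ∧ (D.map φ).sum = 0} (by simpa [Set.Nonempty] using h)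
    obtain ⟨t, htl, htw⟩ := Block.exists_of_minimal hφ C hC0 hCsum
      fun D hDC hD0 hDsum => hCmin D ⟨hDC.le.trans hCX, hD0, hDsum⟩ hDC
    obtain ⟨V, rfl⟩ := Multiset.le_iff_exists_add.1 hCX
    obtain ⟨W, hW, hw⟩ := ih V (lt_add_of_pos_left V (pos_iff_ne_zero.2 hC0))
    refine ⟨t ::ₘ W, ?_, ?_⟩
    · simpa [blocksSeq, htl] using add_le_add_left hW C
    · simp only [blocksWeight, Multiset.map_cons, Multiset.sum_cons, Multiset.card_add] at hw ⊢
      omega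
  · refine ⟨0, by simp [blocksSeq], ?_⟩
    by_contra! hX
    exact h (exists_le_ne_zero_sum_map_eq_zero φ X (by simp [blocksWeight] at hX; omega))

theorem one_mem_subProds_of_le_card [NeZero p] (hφ : IsMetacyclicIndex φ y r)
    (hoy : orderOf y = m) (hm : 0 < m) (hord : ∀ q, q.Prime → q ∣ m → orderOf (r : ZMod q) = p)
    (S : Multiset G) (hS : m + p - 1 ≤ Multiset.card S) : 1 ∈ subProds S := by
  obtain ⟨W, hW, hw⟩ := exists_blocks hφ S
  have := NeZero.pos p
  exact subProds_mono hW (one_mem_subProds_blocksSeq hφ hoy hm hord m 1 (one_mul m) W (by omega))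

end ProductOne

section Metacyclic
variable {G : Type*} [Group G] {x y : G} {p m r : ℕ}

lemma inv_pow_mul_pow_mul_pow (hrel : x⁻¹ * y * x = y ^ r) (k a : ℕ) :
    (x ^ k)⁻¹ * y ^ a * x ^ k = y ^ (a * r ^ k) := by
  have hconj (a : ℕ) : x⁻¹ * y ^ a * x = y ^ (a * r) := by
    rw [mul_comm, pow_mul, ← hrel]
    simpa using (conj_pow (a := x⁻¹) (b := y) (i := a)).symm
  induction k generalizing a with
  | zero => simp
  | succ k ih =>
    calc (x ^ (k + 1))⁻¹ * y ^ a * x ^ (k + 1) = x⁻¹ * ((x ^ k)⁻¹ * y ^ a * x ^ k) * x := by group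
      _ = y ^ (a * r ^ (k + 1)) := by rw [ih, hconj, pow_succ, mul_assoc]

lemma pow_mul_pow_eq_pow_mul_pow (hrel : x⁻¹ * y * x = y ^ r) (a k : ℕ) :
    y ^ a * x ^ k = x ^ k * y ^ (a * r ^ k) := by
  rw [← inv_pow_mul_pow_mul_pow hrel, mul_assoc, mul_inv_cancel_left]

lemma pow_modEq_one_of_conj_eq_pow (hrel : x⁻¹ * y * x = y ^ r) (hox : orderOf x = p)
    (hoy : orderOf y = m) :
    r ^ p ≡ 1 [MOD m] := by
  have h := inv_pow_mul_pow_mul_pow hrel p 1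
  have hxp : x ^ p = 1 := hox ▸ pow_orderOf_eq_one x
  rw [hxp, inv_one, one_mul, mul_one, one_mul, pow_one] at h
  rw [← hoy, ← pow_eq_pow_iff_modEq, pow_one]
  exact h.symm

lemma exists_eq_pow_mul_pow (hrel : x⁻¹ * y * x = y ^ r) (hx : 0 < orderOf x)
    (hy : 0 < orderOf y) (hgen : Subgroup.closure ({x, y} : Set G) = ⊤) (g : G) :
    ∃ b a : ℕ, g = x ^ b * y ^ a := by
  have hmul (c : ℕ) {g : G} : (∃ b a : ℕ, g = x ^ b * y ^ a) →
      (∃ b a : ℕ, x ^ c * g = x ^ b * y ^ a) ∧ ∃ b a : ℕ, y ^ c * g = x ^ b * y ^ a := by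
    rintro ⟨b, a, rfl⟩
    refine ⟨⟨c + b, a, by rw [pow_add, mul_assoc]⟩, b, c * r ^ b + a, ?_⟩
    rw [← mul_assoc, pow_mul_pow_eq_pow_mul_pow hrel, mul_assoc, ← pow_add]
  have hinv {z : G} (hz : 0 < orderOf z) : z⁻¹ = z ^ (orderOf z - 1) :=
    inv_eq_of_mul_eq_one_right (by rw [← pow_succ', Nat.sub_add_cancel hz, pow_orderOf_eq_one])
  have hg : g ∈ Subgroup.closure ({x, y} : Set G) := hgen ▸ Subgroup.mem_top g
  induction hg using Subgroup.closure_induction_left with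
  | one => exact ⟨0, 0, by simp⟩
  | mul_left z hz g _ ih =>
    rcases hz with rfl | rfl
    · simpa using (hmul 1 ih).1
    · simpa using (hmul 1 ih).2
  | inv_mul_cancel z hz g _ ih =>
    rcases hz with rfl | rfl
    · exact hinv hx ▸ (hmul _ ih).1
    · exact hinv hy ▸ (hmul _ ih).2

lemma modEq_of_pow_mul_pow_eq (hcop : (orderOf x).Coprime (orderOf y)) {b a b' a' : ℕ}
    (h : x ^ b * y ^ a = x ^ b' * y ^ a') : b ≡ b' [MOD orderOf x] := by
  have hdisj : Disjoint (Subgroup.zpowers x) (Subgroup.zpowers y) :=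
    Subgroup.disjoint_of_coprime_natCard (by rwa [Nat.card_zpowers, Nat.card_zpowers])
  have heq : (x ^ b')⁻¹ * x ^ b = y ^ a' * (y ^ a)⁻¹ := by
    rw [inv_mul_eq_iff_eq_mul, ← mul_assoc, ← h, mul_inv_cancel_right]
  have hone := Subgroup.disjoint_def.1 hdisj
    (Subgroup.mul_mem _ (Subgroup.inv_mem _ (Subgroup.npow_mem_zpowers x b'))
      (Subgroup.npow_mem_zpowers x b))
    (heq ▸ Subgroup.mul_mem _ (Subgroup.npow_mem_zpowers y a')
      (Subgroup.inv_mem _ (Subgroup.npow_mem_zpowers y a)))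
  exact (pow_eq_pow_iff_modEq.1 (inv_mul_eq_one.1 hone)).symm

/-- The index map `x ^ b * y ^ a ↦ b` modulo `p`, well defined because `⟨x⟩ ∩ ⟨y⟩ = 1`. -/
lemma exists_isMetacyclicIndex (hrel : x⁻¹ * y * x = y ^ r) (hox : orderOf x = p) (hp : 0 < p)
    (hoy : orderOf y = m) (hm : 0 < m) (hgen : Subgroup.closure ({x, y} : Set G) = ⊤)
    (hcop : p.Coprime m) : ∃ φ : G → ZMod p, IsMetacyclicIndex φ y r := by
  choose B A hBA using exists_eq_pow_mul_pow hrel (hox ▸ hp) (hoy ▸ hm) hgen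
  refine ⟨fun g => (B g : ZMod p), fun g h => ?_, fun g hg => ⟨A g, ?_⟩, fun g a => ?_⟩
  · have hgh : g * h = x ^ (B g + B h) * y ^ (A g * r ^ B h + A h) := by
      conv_lhs => rw [hBA g, hBA h]
      rw [mul_assoc, ← mul_assoc (y ^ A g), pow_mul_pow_eq_pow_mul_pow hrel, pow_add, pow_add]
      group
    have := modEq_of_pow_mul_pow_eq (hox ▸ hoy ▸ hcop) ((hBA (g * h)).symm.trans hgh)
    rw [hox] at this
    rw [← Nat.cast_add]
    exact (ZMod.natCast_eq_natCast_iff _ _ _).2 this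
  · obtain ⟨k, hk⟩ := (ZMod.natCast_eq_zero_iff _ _).1 hg
    conv_lhs => rw [hBA g]
    rw [hk, pow_mul, ← hox, pow_orderOf_eq_one, one_pow, one_mul]
  · have hg : g = x ^ (B g % p) * y ^ A g := by rw [← hox, pow_mod_orderOf, ← hBA g]
    rw [ZMod.val_natCast]
    calc g⁻¹ * y ^ a * g
        = (y ^ A g)⁻¹ * ((x ^ (B g % p))⁻¹ * y ^ a * x ^ (B g % p)) * y ^ A g := by
          conv_lhs => rw [hg]
          group
      _ = y ^ (a * r ^ (B g % p)) := by
          rw [inv_pow_mul_pow_mul_pow hrel]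
          group

end Metacyclic

lemma orderOf_natCast_eq_of_pow_modEq_one {p m r : ℕ} (hp : p.Prime) (hr : 0 < r)
    (hrp : r ^ p ≡ 1 [MOD m]) (hr1 : (r - 1).Coprime m) {q : ℕ} (hq : q.Prime) (hqm : q ∣ m) :
    orderOf (r : ZMod q) = p := by
  have := Fact.mk hp
  refine orderOf_eq_prime
    (by simpa using (ZMod.natCast_eq_natCast_iff _ _ _).2 (hrp.of_dvd hqm)) fun h1 => ?_
  have hdvd : q ∣ r - 1 := (ZMod.natCast_eq_zero_iff _ _).1
    (by rw [Nat.cast_sub hr, h1, Nat.cast_one, sub_self])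
  exact hq.one_lt.ne' (Nat.eq_one_of_dvd_coprimes hr1 hdvd hqm)

theorem stmt_9_general (p m r : ℕ) (G : Type*) [Group G] (x y : G)
    (hp : p.Prime) (hm : 0 < m) (hr : 0 < r)
    (hox : orderOf x = p) (hoy : orderOf y = m)
    (hrel : x⁻¹ * y * x = y ^ r)
    (hgen : Subgroup.closure ({x, y} : Set G) = ⊤)
    (hgcd : Nat.gcd (p * (r - 1)) m = 1) :
    (∀ S : Multiset G, Multiset.card S = m + p - 1 → (1 : G) ∈ subProds S) ∧
      dG G ≤ m + p - 2 := by
  have : NeZero p := ⟨hp.ne_zero⟩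
  have hcop : (p * (r - 1)).Coprime m := hgcd
  obtain ⟨φ, hφ⟩ := exists_isMetacyclicIndex hrel hox hp.pos hoy hm hgen
    (hcop.coprime_dvd_left (dvd_mul_right _ _))
  have key := one_mem_subProds_of_le_card hφ hoy hm fun q hq hqm =>
    orderOf_natCast_eq_of_pow_modEq_one hp hr (pow_modEq_one_of_conj_eq_pow hrel hox hoy)
      (hcop.coprime_dvd_left (dvd_mul_left _ _)) hq hqm
  refine ⟨fun S hS => key S hS.ge, csSup_le' ?_⟩
  rintro n ⟨S, rfl, hS⟩
  by_contra! h
  exact hS (key S (by have := hp.two_le; omega))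

theorem stmt_9 (p m r : ℕ) (G : Type*) [Group G] [Fintype G] (x y : G)
    (hp : p.Prime) (hm : 0 < m) (hr : 0 < r)
    (hcard : Fintype.card G = p * m)
    (hox : orderOf x = p) (hoy : orderOf y = m)
    (hrel : x⁻¹ * y * x = y ^ r)
    (hgen : Subgroup.closure ({x, y} : Set G) = ⊤)
    (hpmin : ∀ q : ℕ, q.Prime → q ∣ p * m → p ≤ q)
    (hgcd : Nat.gcd (p * (r - 1)) m = 1) :
    (∀ S : Multiset G, Multiset.card S = m + p - 1 → (1 : G) ∈ subProds S) ∧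
      dG G ≤ m + p - 2 :=
  stmt_9_general p m r G x y hp hm hr hox hoy hrel hgen hgcd
end

section
/- Let G = ⟨x, y | x^p = y^m = 1, x^{-1} y x = y^r⟩ with gcd(p(r-1), m) = 1, N = ⟨y⟩, and let T_0 be a sequence of exactly p elements all lying in the coset x^i N for some i ∈ [1, p-1]. For j ∈ [1, ℓ], let T_j be sequences over G with π(T_j) ∩ N ≠ ∅ and pick u_j ∈ π(T_j) ∩ N. Then for every t ∈ [1, ℓ], the set π(T_0 · T_1 · … · T_t) contains the product set π(T_0) · {u_1, u_1^r, …, u_1^{r^{p-1}}} ⋯ {u_t, u_t^r, …, u_t^{r^{p-1}}}. -/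
/-!
Conjugating an element `n` of `N = ⟨y⟩` by anything in the coset `x ^ c * N` gives `n ^ r ^ c`.
So inserting a block with product `s ∈ N` just before a suffix whose product lies in `x ^ c * N`
multiplies the total product by `s ^ r ^ c`. The suffixes of `T₀` (`p` elements of `x ^ i * N`,
with `i` invertible mod `p`) have products in every coset `x ^ c * N`; this survives such
insertions, so `T₁, …, Tₜ` can be inserted one after another with any exponents `r ^ eⱼ`.
-/

open Subgroup

section

variable {G : Type*} [Group G] {x y : G} {r : ℕ}

lemma inv_mul_mul_eq_pow_of_mem_zpowers (hrel : x⁻¹ * y * x = y ^ r) {n : G}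
    (hn : n ∈ zpowers y) : x⁻¹ * n * x = n ^ r := by
  obtain ⟨k, rfl⟩ := mem_zpowers_iff.mp hn
  rw [← zpow_natCast, ← zpow_mul, mul_comm, zpow_mul, zpow_natCast, ← hrel]
  simpa using (conj_zpow (a := x⁻¹) (b := y) (i := k)).symm

lemma pow_inv_mul_mul_pow_eq_pow_of_mem_zpowers (hrel : x⁻¹ * y * x = y ^ r) (c : ℕ) {n : G}
    (hn : n ∈ zpowers y) : (x ^ c)⁻¹ * n * x ^ c = n ^ r ^ c := by
  induction c with
  | zero => simp
  | succ c ih =>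
    calc (x ^ (c + 1))⁻¹ * n * x ^ (c + 1) = x⁻¹ * ((x ^ c)⁻¹ * n * x ^ c) * x := by group
      _ = (n ^ r ^ c) ^ r := by rw [ih, inv_mul_mul_eq_pow_of_mem_zpowers hrel (pow_mem hn _)]
      _ = n ^ r ^ (c + 1) := by rw [← pow_mul, pow_succ]

lemma inv_mul_mul_eq_pow_of_mem_coset (hrel : x⁻¹ * y * x = y ^ r) {c : ℕ} {g n : G}
    (hg : (x ^ c)⁻¹ * g ∈ zpowers y) (hn : n ∈ zpowers y) : g⁻¹ * n * g = n ^ r ^ c := by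
  obtain ⟨h, hh, rfl⟩ : ∃ h ∈ zpowers y, g = x ^ c * h := ⟨_, hg, by group⟩
  calc (x ^ c * h)⁻¹ * n * (x ^ c * h) = h⁻¹ * ((x ^ c)⁻¹ * n * x ^ c) * h := by group
    _ = h⁻¹ * (n ^ r ^ c * h) := by
        rw [pow_inv_mul_mul_pow_eq_pow_of_mem_zpowers hrel c hn, mul_assoc]
    _ = n ^ r ^ c := by rw [setLike_mul_comm (pow_mem hn _) hh]; group

lemma mul_mem_coset (hrel : x⁻¹ * y * x = y ^ r) {a b : ℕ} {g h : G}
    (hg : (x ^ a)⁻¹ * g ∈ zpowers y) (hh : (x ^ b)⁻¹ * h ∈ zpowers y) :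
    (x ^ (a + b))⁻¹ * (g * h) ∈ zpowers y := by
  have hsplit : (x ^ (a + b))⁻¹ * (g * h) =
      (x ^ b)⁻¹ * ((x ^ a)⁻¹ * g) * x ^ b * ((x ^ b)⁻¹ * h) := by
    rw [pow_add]; group
  rw [hsplit, pow_inv_mul_mul_pow_eq_pow_of_mem_zpowers hrel b hg]
  exact mul_mem (pow_mem hg _) hh

lemma list_prod_mem_coset (hrel : x⁻¹ * y * x = y ^ r) {i : ℕ} :
    ∀ l : List G, (∀ g ∈ l, (x ^ i)⁻¹ * g ∈ zpowers y) →
      (x ^ (i * l.length))⁻¹ * l.prod ∈ zpowers y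
  | [], _ => by simp
  | g :: l, hl => by
    rw [List.length_cons, mul_add_one, add_comm, List.prod_cons]
    exact mul_mem_coset hrel (hl g List.mem_cons_self)
      (list_prod_mem_coset hrel l fun g' hg' => hl g' (List.mem_cons_of_mem _ hg'))

lemma prod_append_append_eq_mul_pow (hrel : x⁻¹ * y * x = y ^ r) {c : ℕ} (A s B : List G)
    (hB : (x ^ c)⁻¹ * B.prod ∈ zpowers y) (hs : s.prod ∈ zpowers y) :
    (A ++ s ++ B).prod = (A ++ B).prod * s.prod ^ r ^ c := by
  rw [← inv_mul_mul_eq_pow_of_mem_coset hrel hB hs]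
  simp only [List.prod_append]
  group

def HasSuffixInEachCoset (x y : G) (L : List G) : Prop :=
  ∀ c : ℕ, ∃ A B : List G, L = A ++ B ∧ (x ^ c)⁻¹ * B.prod ∈ zpowers y

lemma hasSuffixInEachCoset_of_forall_mem (hrel : x⁻¹ * y * x = y ^ r) {i : ℕ}
    (hi : i.Coprime (orderOf x)) (hx : orderOf x ≠ 0) {l : List G} (hl : orderOf x ≤ l.length)
    (hmem : ∀ g ∈ l, (x ^ i)⁻¹ * g ∈ zpowers y) : HasSuffixInEachCoset x y l := by
  intro c
  obtain ⟨k, hk, hik⟩ := Nat.exists_mul_mod_eq_of_coprime c hi hx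
  refine ⟨l.take (l.length - k), l.drop (l.length - k), (List.take_append_drop _ _).symm, ?_⟩
  have hlen : (l.drop (l.length - k)).length = k := by simp; omega
  have := list_prod_mem_coset hrel (l.drop (l.length - k)) fun g hg =>
    hmem g (List.mem_of_mem_drop hg)
  rwa [hlen, pow_inj_mod.mpr hik] at this

lemma HasSuffixInEachCoset.append_append (hrel : x⁻¹ * y * x = y ^ r) {A s B : List G} {c : ℕ}
    (hL : HasSuffixInEachCoset x y (A ++ B)) (hB : (x ^ c)⁻¹ * B.prod ∈ zpowers y)
    (hs : s.prod ∈ zpowers y) : HasSuffixInEachCoset x y (A ++ s ++ B) := by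
  intro c'
  obtain ⟨A', B', hsplit, hB'⟩ := hL c'
  rcases List.append_eq_append_iff.mp hsplit with ⟨M, rfl, rfl⟩ | ⟨M, rfl, rfl⟩
  · exact ⟨A ++ s ++ M, B', by simp, hB'⟩
  · refine ⟨A', M ++ s ++ B, by simp, ?_⟩
    rw [prod_append_append_eq_mul_pow hrel M s B hB hs, ← mul_assoc]
    exact mul_mem hB' (pow_mem hs _)

lemma HasSuffixInEachCoset.exists_insert (hrel : x⁻¹ * y * x = y ^ r) {L : List G}
    (hL : HasSuffixInEachCoset x y L) (s : ℕ → List G) (c : ℕ → ℕ) (t : ℕ)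
    (hs : ∀ j < t, (s j).prod ∈ zpowers y) :
    ∃ L' : List G, HasSuffixInEachCoset x y L' ∧
      (L' : Multiset G) = L + ∑ j ∈ Finset.range t, (s j : Multiset G) ∧
      L'.prod = L.prod * ((List.range t).map fun j => (s j).prod ^ r ^ c j).prod := by
  induction t with
  | zero => exact ⟨L, hL, by simp, by simp⟩
  | succ t ih =>
    obtain ⟨L', hL', hL'coe, hL'prod⟩ := ih fun j hj => hs j (by omega)
    obtain ⟨A, B, rfl, hB⟩ := hL' (c t)
    have hst := hs t t.lt_add_one
    refine ⟨A ++ s t ++ B, hL'.append_append hrel hB hst, ?_, ?_⟩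
    · rw [Finset.sum_range_succ, ← add_assoc, ← hL'coe]
      simp only [← Multiset.coe_add]
      exact Multiset.coe_eq_coe.mpr (by simpa using List.perm_append_comm.append_left A)
    · rw [prod_append_append_eq_mul_pow hrel A (s t) B hB hst, hL'prod, List.range_succ,
        List.map_append, List.prod_append, mul_assoc]
      simp

end

theorem stmt_14_general (p r : ℕ) (G : Type*) [Group G] (x y : G)
    (hp : p.Prime)
    (hox : orderOf x = p)
    (hrel : x⁻¹ * y * x = y ^ r)
    (i : ℕ) (hi1 : 1 ≤ i) (hip : i ≤ p - 1)
    (T0 : Multiset G) (hT0card : Multiset.card T0 = p)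
    (hT0 : ∀ g ∈ T0, (x ^ i)⁻¹ * g ∈ Subgroup.zpowers y)
    (ℓ : ℕ) (T : ℕ → Multiset G) (u : ℕ → G)
    (hu : ∀ j, 1 ≤ j → j ≤ ℓ → u j ∈ piSet (T j) ∧ u j ∈ Subgroup.zpowers y) :
    ∀ t, 1 ≤ t → t ≤ ℓ → ∀ a ∈ piSet T0, ∀ e : ℕ → ℕ, (∀ j, e j ≤ p - 1) →
      a * (((List.range t).map fun j => u (j + 1) ^ (r ^ (e (j + 1)))).prod) ∈
        piSet (T0 + ∑ j ∈ Finset.Icc 1 t, T j) := by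
  rintro t - htℓ a ⟨l0, rfl, rfl⟩ e -
  have hi : i.Coprime (orderOf x) := by
    rw [hox]
    exact (hp.coprime_iff_not_dvd.mpr (Nat.not_dvd_of_pos_of_lt hi1 (by omega))).symm
  have hl0 : HasSuffixInEachCoset x y l0 :=
    hasSuffixInEachCoset_of_forall_mem hrel hi (hox ▸ hp.ne_zero)
      (by rw [hox, ← hT0card, Multiset.coe_card]) hT0
  choose! s hsT hsu using fun j (hj : j < t) => (hu (j + 1) (by omega) (by omega)).1
  obtain ⟨L, -, hLcoe, hLprod⟩ := hl0.exists_insert hrel s (fun j => e (j + 1)) t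
    fun j hj => hsu j hj ▸ (hu (j + 1) (by omega) (by omega)).2
  refine ⟨L, ?_, ?_⟩
  · rw [hLcoe, Finset.sum_congr rfl fun j hj => hsT j (Finset.mem_range.mp hj),
      Finset.range_eq_Ico, Finset.sum_Ico_add', zero_add, Finset.Ico_add_one_right_eq_Icc]
  · rw [hLprod]
    exact congrArg _ (congrArg List.prod (List.map_congr_left fun j hj => by
      rw [hsu j (List.mem_range.mp hj)]))

theorem stmt_14 (p m r : ℕ) (G : Type*) [Group G] [Fintype G] (x y : G)
    (hp : p.Prime) (hm : 0 < m) (hr : 0 < r)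
    (hcard : Fintype.card G = p * m)
    (hox : orderOf x = p) (hoy : orderOf y = m)
    (hrel : x⁻¹ * y * x = y ^ r)
    (hgen : Subgroup.closure ({x, y} : Set G) = ⊤)
    (hgcd : Nat.gcd (p * (r - 1)) m = 1)
    (i : ℕ) (hi1 : 1 ≤ i) (hip : i ≤ p - 1)
    (T0 : Multiset G) (hT0card : Multiset.card T0 = p)
    (hT0 : ∀ g ∈ T0, (x ^ i)⁻¹ * g ∈ Subgroup.zpowers y)
    (ℓ : ℕ) (T : ℕ → Multiset G) (u : ℕ → G)
    (hu : ∀ j, 1 ≤ j → j ≤ ℓ → u j ∈ piSet (T j) ∧ u j ∈ Subgroup.zpowers y) :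
    ∀ t, 1 ≤ t → t ≤ ℓ → ∀ a ∈ piSet T0, ∀ e : ℕ → ℕ, (∀ j, e j ≤ p - 1) →
      a * (((List.range t).map fun j => u (j + 1) ^ (r ^ (e (j + 1)))).prod) ∈
        piSet (T0 + ∑ j ∈ Finset.Icc 1 t, T j) :=
  stmt_14_general p r G x y hp hox hrel i hi1 hip T0 hT0card hT0 ℓ T u hu
end
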